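/- Let φ be an L(B, B*)-valued function analytic on |z| < 1 + ε with φ(z) + φ(z)*|_B ≥ 0. Then for z, w in the open unit disk, k_φ(z,w) := (φ(z) + φ(w)*|_B)/(2(1 − z w̄)) = ∫₀^{2π} (φ(e^{it}) + φ(e^{it})*|_B)/(4π) · 1/((e^{it} − z)(e^{it} − w)^{*}) dt; in particular k_φ is a positive kernel on 𝔻. -/

import Mathlib

/-!
On the unit circle `conj u = u⁻¹`, so
`((u - z) * conj (u - w))⁻¹ = u / ((u - z) * (1 - conj w * u))`, and Cauchy's integral formula
for `u ↦ f u / (1 - conj w * u)` gives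
`∫₀^{2π} f(e^{it}) ((e^{it} - z) * conj (e^{it} - w))⁻¹ dt = 2π f(z) / (1 - conj w * z)`.
Applying this to `u ↦ ⟨φ(u) b, c⟩`, and its conjugate to `u ↦ ⟨φ(u) c, b⟩`, gives the integral
formula. At `u = e^{it}` the integrand of `∑ᵢⱼ ⟨k_φ(zᵢ, zⱼ) bⱼ, bᵢ⟩` equals
`(⟨φ(u) v, v⟩ + conj ⟨φ(u) v, v⟩) / (4π) ≥ 0` with `v = ∑ₖ conj ((u - zₖ)⁻¹) • bₖ`,
so the kernel is positive.
-/

open scoped ComplexOrder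
open Metric Real

/-- The conjugate dual of a complex normed space: continuous anti-linear functionals. -/
abbrev ConjDual (B : Type*) [NormedAddCommGroup B] [NormedSpace ℂ B] :=
  B →SL[starRingEnd ℂ] ℂ

/-- The scalar pairing `⟨k_φ(z,w)b, c⟩` of the Carathéodory kernel
`k_φ(z,w) = (φ(z) + φ(w)*|_B)/(2(1 - z w̄))`. -/
noncomputable def caraKernel {B : Type*} [NormedAddCommGroup B] [NormedSpace ℂ B]
    (φ : ℂ → (B →L[ℂ] ConjDual B)) (z w : ℂ) (b c : B) : ℂ :=
  (2 * (1 - z * (starRingEnd ℂ) w))⁻¹ * (φ z b c + (starRingEnd ℂ) (φ w c b))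

open ComplexConjugate

theorem one_sub_conj_mul_ne_zero {w u : ℂ} (hw : ‖w‖ < 1) (hu : ‖u‖ ≤ 1) :
    1 - conj w * u ≠ 0 := by
  refine sub_ne_zero.2 fun h => ?_
  have : ‖conj w * u‖ < 1 := by
    rw [norm_mul, Complex.norm_conj]
    exact mul_lt_one_of_nonneg_of_lt_one_left (norm_nonneg w) hw hu
  simp [← h] at this

theorem inv_mul_conj_sub_eq {u z w : ℂ} (hu : ‖u‖ = 1) :
    ((u - z) * conj (u - w))⁻¹ = u * ((u - z) * (1 - conj w * u))⁻¹ := by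
  have hu0 : u ≠ 0 := norm_ne_zero_iff.1 (by simp [hu])
  rw [map_sub, ← Complex.inv_eq_conj hu,
    show u⁻¹ - conj w = u⁻¹ * (1 - conj w * u) by field_simp]
  simp only [mul_inv, inv_inv]
  ring

theorem intervalIntegral.integral_nonneg_complex {f : ℝ → ℂ} {a b : ℝ} (hab : a ≤ b)
    (hf : ∀ u ∈ Set.Icc a b, 0 ≤ f u) : 0 ≤ ∫ u in a..b, f u := by
  have hre : ∀ u ∈ Set.uIcc a b, f u = ((f u).re : ℂ) := fun u hu => by
    rw [Set.uIcc_of_le hab] at hu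
    exact Complex.ext rfl (Complex.nonneg_iff.1 (hf u hu)).2.symm
  rw [intervalIntegral.integral_congr hre, intervalIntegral.integral_ofReal, Complex.zero_le_real]
  exact intervalIntegral.integral_nonneg hab fun u hu => (Complex.nonneg_iff.1 (hf u hu)).1

theorem DiffContOnCl.integral_circleMap_mul_inv_sub_mul {f : ℂ → ℂ} {c w : ℂ} {R : ℝ}
    (hf : DiffContOnCl ℂ f (ball c R)) (hw : w ∈ ball c R) :
    ∫ θ in (0 : ℝ)..2 * π, circleMap 0 R θ * (circleMap c R θ - w)⁻¹ * f (circleMap c R θ) =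
      2 * π * f w := by
  have h := hf.circleIntegral_sub_inv_smul hw
  simp only [circleIntegral, deriv_circleMap, smul_eq_mul] at h
  apply mul_left_cancel₀ Complex.I_ne_zero
  rw [← intervalIntegral.integral_const_mul]
  convert h using 1
  · congr 1; ext θ; ring
  · ring

theorem continuous_mul_inv_sub_mul_conj_sub {f : ℂ → ℂ} (hf : ContinuousOn f (sphere 0 1))
    {z w : ℂ} (hz : ‖z‖ < 1) (hw : ‖w‖ < 1) :
    Continuous fun t : ℝ => f (Complex.exp (t * Complex.I)) *
      ((Complex.exp (t * Complex.I) - z) * conj (Complex.exp (t * Complex.I) - w))⁻¹ := by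
  have hE : ∀ t : ℝ, ‖Complex.exp (t * Complex.I)‖ = 1 := Complex.norm_exp_ofReal_mul_I
  have hne : ∀ {a : ℂ}, ‖a‖ < 1 → ∀ t : ℝ, Complex.exp (t * Complex.I) - a ≠ 0 :=
    fun ha t => sub_ne_zero.2 (ne_of_apply_ne norm (by rw [hE]; exact ha.ne'))
  refine (hf.comp_continuous (by fun_prop) fun t => by simp [hE]).mul ?_
  exact Continuous.inv₀ (by fun_prop) fun t => mul_ne_zero (hne hz t) ((map_ne_zero _).2 (hne hw t))

theorem DiffContOnCl.integral_mul_inv_sub_mul_conj_sub {f : ℂ → ℂ}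
    (hf : DiffContOnCl ℂ f (ball 0 1)) {z w : ℂ} (hz : z ∈ ball (0 : ℂ) 1)
    (hw : w ∈ ball (0 : ℂ) 1) :
    ∫ t in (0 : ℝ)..2 * π, f (Complex.exp (t * Complex.I)) *
      ((Complex.exp (t * Complex.I) - z) * conj (Complex.exp (t * Complex.I) - w))⁻¹ =
      2 * π * f z / (1 - conj w * z) := by
  rw [mem_ball_zero_iff] at hz hw
  have hmob : DiffContOnCl ℂ (fun u => (1 - conj w * u)⁻¹) (ball 0 1) := by
    refine DifferentiableOn.diffContOnCl ?_
    rw [closure_ball 0 one_ne_zero]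
    exact DifferentiableOn.inv (by fun_prop) fun u hu =>
      one_sub_conj_mul_ne_zero hw (mem_closedBall_zero_iff.1 hu)
  have h := (hmob.smul hf).integral_circleMap_mul_inv_sub_mul (mem_ball_zero_iff.2 hz)
  simp only [circleMap, zero_add, Complex.ofReal_one, one_mul, smul_eq_mul] at h
  rw [show 2 * π * f z / (1 - conj w * z) = 2 * π * ((1 - conj w * z)⁻¹ * f z) by ring, ← h]
  refine intervalIntegral.integral_congr fun t _ => ?_
  simp only [inv_mul_conj_sub_eq (Complex.norm_exp_ofReal_mul_I t), mul_inv]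
  ring

theorem DiffContOnCl.caratheodory_kernel_eq_integral {f g : ℂ → ℂ}
    (hf : DiffContOnCl ℂ f (ball 0 1)) (hg : DiffContOnCl ℂ g (ball 0 1)) {z w : ℂ}
    (hz : z ∈ ball (0 : ℂ) 1) (hw : w ∈ ball (0 : ℂ) 1) :
    (2 * (1 - z * conj w))⁻¹ * (f z + conj (g w)) =
      ∫ t in (0 : ℝ)..2 * π,
        (f (Complex.exp (t * Complex.I)) + conj (g (Complex.exp (t * Complex.I)))) /
            (4 * (π : ℂ)) *
          ((Complex.exp (t * Complex.I) - z) * conj (Complex.exp (t * Complex.I) - w))⁻¹ := by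
  set E : ℝ → ℂ := fun t => Complex.exp (t * Complex.I)
  have hsplit : ∀ t, (f (E t) + conj (g (E t))) / (4 * (π : ℂ)) *
        ((E t - z) * conj (E t - w))⁻¹ =
      (4 * (π : ℂ))⁻¹ * (f (E t) * ((E t - z) * conj (E t - w))⁻¹) +
        conj ((4 * (π : ℂ))⁻¹ * (g (E t) * ((E t - w) * conj (E t - z))⁻¹)) := fun t => by
    simp only [map_mul, map_inv₀, Complex.conj_conj, map_ofNat, Complex.conj_ofReal]
    ring
  have hcont : ∀ {h : ℂ → ℂ} {a b : ℂ}, DiffContOnCl ℂ h (ball 0 1) → a ∈ ball (0 : ℂ) 1 →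
      b ∈ ball (0 : ℂ) 1 →
        Continuous fun t => (4 * (π : ℂ))⁻¹ * (h (E t) * ((E t - a) * conj (E t - b))⁻¹) :=
    fun hh ha hb => (continuous_mul_inv_sub_mul_conj_sub
      (hh.continuousOn_ball.mono sphere_subset_closedBall)
      (mem_ball_zero_iff.1 ha) (mem_ball_zero_iff.1 hb)).const_mul _
  rw [intervalIntegral.integral_congr fun t _ => hsplit t,
    intervalIntegral.integral_add ((hcont hf hz hw).intervalIntegrable _ _)
      ((Complex.continuous_conj.comp' (hcont hg hw hz)).intervalIntegrable _ _),
    intervalIntegral.intervalIntegral_conj, intervalIntegral.integral_const_mul,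
    intervalIntegral.integral_const_mul,
    hf.integral_mul_inv_sub_mul_conj_sub hz hw, hg.integral_mul_inv_sub_mul_conj_sub hw hz]
  rw [mem_ball_zero_iff] at hz hw
  have h₁ := one_sub_conj_mul_ne_zero hw hz.le
  have h₂ := one_sub_conj_mul_ne_zero hz hw.le
  have hπ : (π : ℂ) ≠ 0 := Complex.ofReal_ne_zero.2 pi_ne_zero
  simp only [map_mul, map_inv₀, map_div₀, map_sub, map_one, map_ofNat, Complex.conj_conj,
    Complex.conj_ofReal]
  field_simp
  ring

section Pairing

variable {B : Type*} [NormedAddCommGroup B] [NormedSpace ℂ B]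

theorem DiffContOnCl.apply_apply {φ : ℂ → (B →L[ℂ] ConjDual B)} {s : Set ℂ}
    (hφ : DiffContOnCl ℂ φ s) (b c : B) : DiffContOnCl ℂ (fun u => φ u b c) s :=
  (((ContinuousLinearMap.apply' ℂ (starRingEnd ℂ) c).comp
    (ContinuousLinearMap.apply ℂ (ConjDual B) b)).differentiable.comp_diffContOnCl hφ :)

theorem caraKernel_eq_integral {φ : ℂ → (B →L[ℂ] ConjDual B)} (hφ : DiffContOnCl ℂ φ (ball 0 1))
    {z w : ℂ} (hz : z ∈ ball (0 : ℂ) 1) (hw : w ∈ ball (0 : ℂ) 1) (b c : B) :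
    caraKernel φ z w b c =
      ∫ t in (0 : ℝ)..2 * π,
        (φ (Complex.exp (t * Complex.I)) b c + conj (φ (Complex.exp (t * Complex.I)) c b)) /
            (4 * (π : ℂ)) *
          ((Complex.exp (t * Complex.I) - z) * conj (Complex.exp (t * Complex.I) - w))⁻¹ :=
  (hφ.apply_apply b c).caratheodory_kernel_eq_integral (hφ.apply_apply c b) hz hw

theorem sum_sum_add_conj_mul_mul_conj {ι : Type*} [Fintype ι] (L : B →L[ℂ] ConjDual B)
    (b : ι → B) (a : ι → ℂ) :
    ∑ i, ∑ j, (L (b j) (b i) + conj (L (b i) (b j))) * (a i * conj (a j)) =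
      L (∑ k, conj (a k) • b k) (∑ k, conj (a k) • b k) +
        conj (L (∑ k, conj (a k) • b k) (∑ k, conj (a k) • b k)) := by
  simp only [map_sum, map_smul, map_smulₛₗ, FunLike.coe_sum, Finset.sum_apply,
    FunLike.coe_smul, Pi.smul_apply, smul_eq_mul, Complex.conj_conj, map_mul,
    add_mul, Finset.sum_add_distrib, Finset.mul_sum]
  congr 1
  · exact Finset.sum_congr rfl fun i _ => Finset.sum_congr rfl fun j _ => by ring
  · rw [Finset.sum_comm]
    exact Finset.sum_congr rfl fun i _ => Finset.sum_congr rfl fun j _ => by ring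

theorem caraKernel_sum_nonneg {φ : ℂ → (B →L[ℂ] ConjDual B)} (hφ : DiffContOnCl ℂ φ (ball 0 1))
    (hpos : ∀ u : ℂ, ‖u‖ = 1 → ∀ b : B, 0 ≤ φ u b b + conj (φ u b b))
    {ι : Type*} [Fintype ι] (z : ι → ℂ) (hz : ∀ i, z i ∈ ball (0 : ℂ) 1) (b : ι → B) :
    0 ≤ ∑ i, ∑ j, caraKernel φ (z i) (z j) (b j) (b i) := by
  set E : ℝ → ℂ := fun t => Complex.exp (t * Complex.I)
  set F : ι → ι → ℝ → ℂ := fun i j t => (φ (E t) (b j) (b i) + conj (φ (E t) (b i) (b j))) /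
      (4 * (π : ℂ)) * ((E t - z i) * conj (E t - z j))⁻¹
  have hF : ∀ i j, caraKernel φ (z i) (z j) (b j) (b i) = ∫ t in (0 : ℝ)..2 * π, F i j t :=
    fun i j => caraKernel_eq_integral hφ (hz i) (hz j) (b j) (b i)
  have hcont : ∀ i j, Continuous (F i j) := fun i j =>
    have hpair : ∀ c d : B, ContinuousOn (fun u => φ u c d) (sphere 0 1) := fun c d =>
      (hφ.apply_apply c d).continuousOn_ball.mono sphere_subset_closedBall
    continuous_mul_inv_sub_mul_conj_sub
      (((hpair _ _).add (Complex.continuous_conj.comp_continuousOn (hpair _ _))).div_const _)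
      (mem_ball_zero_iff.1 (hz i)) (mem_ball_zero_iff.1 (hz j))
  simp only [hF,
    ← intervalIntegral.integral_finsetSum fun j _ => (hcont _ j).intervalIntegrable _ _]
  rw [← intervalIntegral.integral_finsetSum fun i _ =>
    (continuous_finsetSum _ fun j _ => hcont i j).intervalIntegrable _ _]
  refine intervalIntegral.integral_nonneg_complex (by positivity) fun t _ => ?_
  have key := sum_sum_add_conj_mul_mul_conj (φ (E t)) b fun k => (E t - z k)⁻¹
  simp only [map_inv₀, ← mul_inv] at key
  simp only [F, div_mul_eq_mul_div, ← Finset.sum_div, key]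
  exact div_nonneg (hpos _ (Complex.norm_exp_ofReal_mul_I t) _) (by positivity)

end Pairing

theorem caratheodory_kernel_integral_formula_general {B : Type*} [NormedAddCommGroup B]
    [NormedSpace ℂ B]
    (φ : ℂ → (B →L[ℂ] ConjDual B)) (ε : ℝ) (hε : 0 < ε)
    (hφ : DifferentiableOn ℂ φ (ball (0 : ℂ) (1 + ε)))
    (hpos : ∀ z : ℂ, ‖z‖ ≤ 1 → ∀ b : B, 0 ≤ φ z b b + (starRingEnd ℂ) (φ z b b)) :
    (∀ z ∈ ball (0 : ℂ) 1, ∀ w ∈ ball (0 : ℂ) 1, ∀ b c : B,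
      caraKernel φ z w b c =
        ∫ t in (0 : ℝ)..(2 * π),
          ((φ (Complex.exp (t * Complex.I)) b c +
              (starRingEnd ℂ) (φ (Complex.exp (t * Complex.I)) c b)) / (4 * (π : ℂ))) *
            ((Complex.exp (t * Complex.I) - z) *
              (starRingEnd ℂ) (Complex.exp (t * Complex.I) - w))⁻¹) ∧
    (∀ (n : ℕ) (z : Fin n → ℂ), (∀ i, z i ∈ ball (0 : ℂ) 1) → ∀ b : Fin n → B,
      0 ≤ ∑ i, ∑ j, caraKernel φ (z i) (z j) (b j) (b i)) := by
  have hφ' : DiffContOnCl ℂ φ (ball 0 1) :=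
    hφ.diffContOnCl_ball (closedBall_subset_ball (by linarith))
  exact ⟨fun z hz w hw b c => caraKernel_eq_integral hφ' hz hw b c,
    fun n z hz b => caraKernel_sum_nonneg hφ' (fun u hu => hpos u hu.le) z hz b⟩

/-- For `φ` analytic on a disk of radius `1 + ε` with positive real part, the kernel
`k_φ(z,w)` is given by
`∫₀^{2π} (φ(e^{it}) + φ(e^{it})*|_B)/(4π) · ((e^{it}−z)(e^{it}−w)^*)⁻¹ dt`
(weakly, paired against `b, c ∈ B`); in particular `k_φ` is a positive kernel on the open
unit disk. -/
theorem caratheodory_kernel_integral_formula {B : Type*} [NormedAddCommGroup B]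
    [NormedSpace ℂ B] [CompleteSpace B] [TopologicalSpace.SeparableSpace B]
    (φ : ℂ → (B →L[ℂ] ConjDual B)) (ε : ℝ) (hε : 0 < ε)
    (hφ : DifferentiableOn ℂ φ (ball (0 : ℂ) (1 + ε)))
    (hpos : ∀ z : ℂ, ‖z‖ ≤ 1 → ∀ b : B, 0 ≤ φ z b b + (starRingEnd ℂ) (φ z b b)) :
    (∀ z ∈ ball (0 : ℂ) 1, ∀ w ∈ ball (0 : ℂ) 1, ∀ b c : B,
      caraKernel φ z w b c =
        ∫ t in (0 : ℝ)..(2 * π),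
          ((φ (Complex.exp (t * Complex.I)) b c +
              (starRingEnd ℂ) (φ (Complex.exp (t * Complex.I)) c b)) / (4 * (π : ℂ))) *
            ((Complex.exp (t * Complex.I) - z) *
              (starRingEnd ℂ) (Complex.exp (t * Complex.I) - w))⁻¹) ∧
    (∀ (n : ℕ) (z : Fin n → ℂ), (∀ i, z i ∈ ball (0 : ℂ) 1) → ∀ b : Fin n → B,
      0 ≤ ∑ i, ∑ j, caraKernel φ (z i) (z j) (b j) (b i)) :=
  caratheodory_kernel_integral_formula_general φ ε hε hφ hpos
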